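/- arXiv:1901.07089 — 6 statements merged into one kernel-verified Lean document; each statement's English description precedes it below -/
import Mathlib

section
/- Let $V$ be a finite-dimensional real normed vector space, $f:V\to V$ an invertible linear map, and $C\subseteq V$ a closed convex cone containing no line with $f(C)=C$. Suppose $f(x)=x$ for some nonzero $x\in V$, and $f(y)-y=ax$ for some $y\in C$ and real number $a$. Then $a=0$. -/
private lemma aux_smul_mem {V : Type*} [NormedAddCommGroup V] [NormedSpace ℝ V]
    (h : V →ₗ[ℝ] V) (C : ConvexCone ℝ V) (hCcl : IsClosed (C : Set V))
    (hsub : ∀ v ∈ C, h v ∈ C)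
    (x : V) (hhx : h x = x) (y : V) (hy : y ∈ C) (a : ℝ)
    (hhy : h y = y + a • x) : a • x ∈ C := by
  have key : ∀ n : ℕ, h^[n] y ∈ C ∧ h^[n] y = y + (n : ℝ) • (a • x) := by
    intro n
    induction n with
    | zero => simpa using hy
    | succ n ih =>
      rw [Function.iterate_succ_apply', ih.2]
      constructor
      · exact hsub _ (ih.2 ▸ ih.1)
      · rw [map_add, hhy, map_smul, map_smul, hhx]
        push_cast
        module
  -- the sequence (1/(n+1)) • h^[n+1] y lies in C and tends to a • x
  have hmem : ∀ n : ℕ, (((n : ℝ) + 1)⁻¹) • h^[n + 1] y ∈ C := by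
    intro n
    exact C.smul_mem (by positivity) (key (n + 1)).1
  have heq : ∀ n : ℕ, (((n : ℝ) + 1)⁻¹) • h^[n + 1] y
      = (((n : ℝ) + 1)⁻¹) • y + a • x := by
    intro n
    rw [(key (n + 1)).2]
    have hne : ((n : ℝ) + 1) ≠ 0 := by positivity
    push_cast
    rw [smul_add, smul_smul, inv_mul_cancel₀ hne, one_smul]
  have hlim : Filter.Tendsto (fun n : ℕ => (((n : ℝ) + 1)⁻¹) • h^[n + 1] y)
      Filter.atTop (nhds (a • x)) := by
    simp only [heq]
    have h1 : Filter.Tendsto (fun n : ℕ => ((n : ℝ) + 1)⁻¹) Filter.atTop (nhds 0) := by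
      simpa [one_div] using tendsto_one_div_add_atTop_nhds_zero_nat (𝕜 := ℝ)
    have h2 : Filter.Tendsto (fun n : ℕ => (((n : ℝ) + 1)⁻¹) • y)
        Filter.atTop (nhds 0) := by
      simpa using h1.smul_const y
    simpa using h2.add_const (a • x)
  exact hCcl.mem_of_tendsto hlim (Filter.Eventually.of_forall hmem)

/-- If an invertible linear map `f` of a finite-dimensional real normed
vector space preserves a closed convex cone `C` containing no line, fixes a nonzero
vector `x`, and `f y - y = a • x` for some `y ∈ C`, then `a = 0`. -/
theorem stmt_1 {V : Type*} [NormedAddCommGroup V] [NormedSpace ℝ V]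
    [FiniteDimensional ℝ V]
    (f : V →ₗ[ℝ] V) (hf : Function.Bijective f)
    (C : ConvexCone ℝ V) (hCcl : IsClosed (C : Set V))
    (hCsal : ∀ v ∈ C, -v ∈ C → v = 0)
    (hfC : f '' (C : Set V) = (C : Set V))
    (x : V) (hx0 : x ≠ 0) (hfx : f x = x)
    (y : V) (hy : y ∈ C) (a : ℝ) (ha : f y - y = a • x) :
    a = 0 := by
  set e := LinearEquiv.ofBijective f hf with he
  have hfy : f y = y + a • x := by rw [← ha]; abel
  have hfwd : ∀ v ∈ C, f v ∈ C := by
    intro v hv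
    have h := Set.mem_image_of_mem f (show v ∈ (C : Set V) from hv)
    rwa [hfC] at h
  have hbwd : ∀ v ∈ C, (e.symm : V →ₗ[ℝ] V) v ∈ C := by
    intro v hv
    have hv' : v ∈ (C : Set V) := hv
    rw [← hfC] at hv'
    obtain ⟨w, hw, rfl⟩ := hv'
    have : (e.symm : V →ₗ[ℝ] V) (f w) = w := e.symm_apply_apply w
    rwa [this]
  have hex : (e.symm : V →ₗ[ℝ] V) x = x := by
    have : e x = x := hfx
    rw [← this, LinearEquiv.coe_coe, e.symm_apply_apply, this]
  have hey : (e.symm : V →ₗ[ℝ] V) y = y + (-a) • x := by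
    have : e (y + (-a) • x) = y := by
      show f (y + (-a) • x) = y
      rw [map_add, map_smul, hfx, hfy]
      module
    have h := congrArg e.symm this
    rw [e.symm_apply_apply] at h
    exact h.symm
  have h1 : a • x ∈ C := aux_smul_mem f C hCcl hfwd x hfx y hy a hfy
  have h2 : (-a) • x ∈ C := aux_smul_mem (e.symm : V →ₗ[ℝ] V) C hCcl hbwd x hex y hy (-a) hey
  have h3 : a • x = 0 := hCsal _ h1 (by rwa [← neg_smul])
  rcases smul_eq_zero.mp h3 with h | h
  · exact h
  · exact absurd h hx0
end

section
/- Let $\varphi$ be an invertible linear map of a finite-dimensional real vector space $V$ such that all complex eigenvalues of $\varphi$ are algebraic integers of modulus at most $1$, and $\varphi$ preserves a lattice (i.e., $\varphi$ is represented by an integer matrix). Then all eigenvalues of $\varphi$ are roots of unity. -/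
open Polynomial IntermediateField

lemma aux_prod_le_one (s : Multiset ℝ) (h : ∀ x ∈ s, 0 ≤ x ∧ x ≤ 1) :
    s.prod ≤ 1 ∧ 0 ≤ s.prod := by
  induction s using Multiset.induction with
  | empty => simp
  | cons a s ih =>
    obtain ⟨ha0, ha1⟩ := h a (Multiset.mem_cons_self a s)
    obtain ⟨hs1, hs0⟩ := ih (fun x hx => h x (Multiset.mem_cons_of_mem hx))
    rw [Multiset.prod_cons]
    constructor
    · calc a * s.prod ≤ 1 * 1 := mul_le_mul ha1 hs1 hs0 zero_le_one
        _ = 1 := one_mul 1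
    · exact mul_nonneg ha0 hs0

/-- Kronecker's theorem: an invertible linear map represented by an
integer matrix all of whose complex eigenvalues (roots of the characteristic polynomial)
have modulus at most `1` has all its eigenvalues roots of unity. -/
theorem stmt_4 {m : ℕ} (M : Matrix (Fin m) (Fin m) ℤ) (hdet : M.det ≠ 0)
    (h1 : ∀ μ ∈ ((M.map (Int.cast : ℤ → ℂ)).charpoly).roots, ‖μ‖ ≤ 1) :
    ∀ μ ∈ ((M.map (Int.cast : ℤ → ℂ)).charpoly).roots,
      ∃ n : ℕ, 0 < n ∧ μ ^ n = 1 := by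
  classical
  set p : ℤ[X] := M.charpoly with hp
  set P : ℂ[X] := (M.map (Int.cast : ℤ → ℂ)).charpoly with hP
  have hPmap : P = p.map (Int.castRingHom ℂ) :=
    Matrix.charpoly_map M (Int.castRingHom ℂ)
  have hpmonic : p.Monic := Matrix.charpoly_monic M
  have hPmonic : P.Monic := hPmap ▸ hpmonic.map _
  have hPsplits : P.Splits := IsAlgClosed.splits P
  -- product of the roots has norm ≥ 1
  have hcoeff : P.coeff 0 = (-1) ^ P.natDegree * P.roots.prod :=
    hPsplits.coeff_zero_eq_prod_roots_of_monic hPmonic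
  have hcoeffdet : P.coeff 0 = ((-1) ^ m * M.det : ℤ) := by
    rw [hPmap, coeff_map]
    have := Matrix.det_eq_sign_charpoly_coeff M
    rw [show Fintype.card (Fin m) = m from Fintype.card_fin m] at this
    have h2 : p.coeff 0 = (-1 : ℤ) ^ m * M.det := by
      rw [this, ← mul_assoc, ← pow_add, ← two_mul, pow_mul]
      norm_num [hp]
    rw [h2]
    simp
  have hnormprod : (1 : ℝ) ≤ ‖P.roots.prod‖ := by
    have : ‖P.coeff 0‖ = ‖P.roots.prod‖ := by
      rw [hcoeff, norm_mul, norm_pow, norm_neg, norm_one, one_pow, one_mul]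
    rw [← this, hcoeffdet]
    have : (1 : ℤ) ≤ |(-1) ^ m * M.det| := by
      rcases lt_or_ge 0 ((-1) ^ m * M.det) with h | h
      · rw [abs_of_pos h]; omega
      · have hne : (-1 : ℤ) ^ m * M.det ≠ 0 := by
          intro hc
          rcases mul_eq_zero.mp hc with hc | hc
          · exact absurd hc (pow_ne_zero m (by norm_num))
          · exact hdet hc
        rw [abs_of_nonpos h]; omega
    calc (1 : ℝ) ≤ (|(-1) ^ m * M.det| : ℤ) := by exact_mod_cast this
      _ = ‖(((-1) ^ m * M.det : ℤ) : ℂ)‖ := by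
          rw [Complex.norm_intCast, Int.cast_abs]
  -- every root has norm exactly 1
  have hnorm1 : ∀ μ ∈ P.roots, ‖μ‖ = 1 := by
    intro μ hμ
    refine le_antisymm (h1 μ hμ) ?_
    have hrest := aux_prod_le_one ((P.roots.erase μ).map norm)
      (by
        intro x hx
        obtain ⟨y, hy, rfl⟩ := Multiset.mem_map.mp hx
        exact ⟨norm_nonneg y, h1 y (Multiset.mem_of_mem_erase hy)⟩)
    have hnormmul : ∀ s : Multiset ℂ, ‖s.prod‖ = (s.map norm).prod := by
      intro s
      induction s using Multiset.induction with
      | empty => simp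
      | cons a s ih => simp [ih]
    have hprodeq : ‖P.roots.prod‖ = ‖μ‖ * ((P.roots.erase μ).map norm).prod := by
      conv_lhs => rw [← Multiset.cons_erase hμ]
      rw [hnormmul, Multiset.map_cons, Multiset.prod_cons]
    have h2 : (1 : ℝ) ≤ ‖μ‖ * ((P.roots.erase μ).map norm).prod := hprodeq ▸ hnormprod
    nlinarith [norm_nonneg μ, hrest.1, hrest.2]
  -- the fixed root
  intro μ hμ
  have hPne : P ≠ 0 := hPmonic.ne_zero
  have hμroot : IsRoot P μ := isRoot_of_mem_roots hμ
  -- μ is an algebraic integer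
  have hint : IsIntegral ℤ μ := by
    refine ⟨p, hpmonic, ?_⟩
    rwa [← eval_map, algebraMap_int_eq, ← hPmap]
  have hintQ : IsIntegral ℚ μ := hint.tower_top
  -- work in the number field ℚ(μ)
  let K : IntermediateField ℚ ℂ := ℚ⟮μ⟯
  haveI : FiniteDimensional ℚ K := IntermediateField.adjoin.finiteDimensional hintQ
  haveI : NumberField K := ⟨⟩
  let x : K := IntermediateField.AdjoinSimple.gen ℚ μ
  have hxμ : (algebraMap K ℂ) x = μ := IntermediateField.AdjoinSimple.algebraMap_gen ℚ μ
  have hxint : IsIntegral ℤ x := by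
    have hinj : Function.Injective (algebraMap K ℂ) := (algebraMap K ℂ).injective
    rw [← isIntegral_algebraMap_iff hinj, hxμ]
    exact hint
  -- the rational polynomial whose roots contain all conjugates
  set q : ℚ[X] := p.map (Int.castRingHom ℚ) with hq
  have hqμ : aeval μ q = 0 := by
    rw [hq, aeval_def, eval₂_eq_eval_map, Polynomial.map_map]
    have : (algebraMap ℚ ℂ).comp (Int.castRingHom ℚ) = Int.castRingHom ℂ := by
      ext n; simp
    rw [this, ← hPmap]
    exact hμroot
  have hmindvd : minpoly ℚ μ ∣ q := minpoly.dvd ℚ μ hqμ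
  have hconj : ∀ φ : K →+* ℂ, ‖φ x‖ = 1 := by
    intro φ
    -- φ x is a root of the minimal polynomial of μ, hence of P
    have hminx : minpoly ℚ x = minpoly ℚ μ := by
      rw [← hxμ]
      exact (minpoly.algebraMap_eq (algebraMap K ℂ).injective x).symm
    have haev : aeval (φ x) (minpoly ℚ x) = 0 := by
      have h := aeval_algHom_apply φ.toRatAlgHom x (minpoly ℚ x)
      rw [minpoly.aeval, map_zero] at h
      exact h
    have hq0 : aeval (φ x) q = 0 := by
      obtain ⟨r, hr⟩ := hmindvd
      rw [hr, map_mul, ← hminx, haev, zero_mul]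
    have hroot : φ x ∈ P.roots := by
      rw [mem_roots hPne]
      have : P = q.map (algebraMap ℚ ℂ) := by
        rw [hPmap, hq, Polynomial.map_map]
        congr 1
      rw [this]
      rw [IsRoot, eval_map, ← aeval_def]
      exact hq0
    exact hnorm1 _ hroot
  obtain ⟨n, hn, hxn⟩ := NumberField.Embeddings.pow_eq_one_of_norm_eq_one K ℂ hxint hconj
  refine ⟨n, hn, ?_⟩
  have := congrArg (algebraMap K ℂ) hxn
  rwa [map_pow, hxμ, map_one] at this
end

section
/- Let $f:X\to X$ be a surjective endomorphism of a projective variety $X$. Then $f$ is amplified if and only if for every nonzero pseudo-effective $1$-cycle class $Z\in\overline{NE}(X)$, we have $f_*Z\not\equiv_w Z$. -/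
open Set

lemma sum_of_embedding {ι κ M : Type*} [Fintype ι] [Fintype κ] [AddCommMonoid M]
    (e : ι ↪ κ) (f : κ → M) (h0 : ∀ i, (¬ ∃ j, e j = i) → f i = 0) :
    ∑ i, f i = ∑ j, f (e j) :=
  calc ∑ i, f i = ∑ i ∈ Finset.univ.map e, f i := by
        refine (Finset.sum_subset (Finset.subset_univ _) ?_).symm
        intro i _ hi
        refine h0 i fun ⟨j, hj⟩ => hi ?_
        exact Finset.mem_map.mpr ⟨j, Finset.mem_univ j, hj⟩
    _ = ∑ j, f (e j) := Finset.sum_map _ _ _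

/-- Carathéodory: convex hull of a compact set in a finite-dimensional normed space
is compact. -/
lemma isCompact_convexHull_of_isCompact {E : Type*} [NormedAddCommGroup E] [NormedSpace ℝ E]
    [FiniteDimensional ℝ E] {s : Set E} (hs : IsCompact s) :
    IsCompact (convexHull ℝ s) := by
  classical
  rcases s.eq_empty_or_nonempty with rfl | ⟨x₀, hx₀⟩
  · simp
  set d := Module.finrank ℝ E + 1 with hd
  have key : convexHull ℝ s =
      (fun q : (Fin d → ℝ) × (Fin d → E) => ∑ i, q.1 i • q.2 i) ''
        (stdSimplex ℝ (Fin d) ×ˢ Set.univ.pi fun _ : Fin d => s) := by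
    apply Set.Subset.antisymm
    · intro x hx
      obtain ⟨ι, hι, z, w, hzs, hai, hw0, hw1, hwz⟩ := eq_pos_convex_span_of_mem_convexHull hx
      have hcard : Fintype.card ι ≤ d := by
        refine hai.card_le_finrank_succ.trans ?_
        have := Submodule.finrank_le (vectorSpan ℝ (Set.range z))
        omega
      obtain ⟨e⟩ : Nonempty (ι ↪ Fin d) := by
        rw [← Fintype.card_fin d] at hcard
        exact Function.Embedding.nonempty_of_card_le hcard
      set w' : Fin d → ℝ := fun i => if h : ∃ j, e j = i then w h.choose else 0 with hw'
      set z' : Fin d → E := fun i => if h : ∃ j, e j = i then z h.choose else x₀ with hz'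
      have hwe : ∀ j, w' (e j) = w j := by
        intro j
        have h : ∃ j', e j' = e j := ⟨j, rfl⟩
        have : h.choose = j := e.injective h.choose_spec
        simp [hw', dif_pos h, this]
      have hze : ∀ j, z' (e j) = z j := by
        intro j
        have h : ∃ j', e j' = e j := ⟨j, rfl⟩
        have : h.choose = j := e.injective h.choose_spec
        simp [hz', dif_pos h, this]
      refine ⟨⟨w', z'⟩, ⟨⟨?_, ?_⟩, ?_⟩, ?_⟩
      · intro i
        by_cases h : ∃ j, e j = i
        · simp only [hw', dif_pos h]; exact (hw0 _).le
        · simp [hw', dif_neg h]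
      · rw [sum_of_embedding e w' (fun i hi => by simp [hw', dif_neg hi])]
        simp_rw [hwe]
        exact hw1
      · intro i _
        by_cases h : ∃ j, e j = i
        · simp only [hz', dif_pos h]
          exact hzs ⟨h.choose, rfl⟩
        · simp only [hz', dif_neg h]; exact hx₀
      · simp only
        rw [sum_of_embedding e (fun i => w' i • z' i) (fun i hi => by simp [hw', dif_neg hi])]
        simp_rw [hwe, hze]
        exact hwz
    · rintro x ⟨⟨w, z⟩, ⟨⟨hw0, hw1⟩, hz⟩, rfl⟩
      exact (convex_convexHull ℝ s).sum_mem (fun i _ => hw0 i) hw1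
        fun i _ => subset_convexHull ℝ s (hz i (Set.mem_univ i))
  rw [key]
  refine (((isCompact_stdSimplex _ _).prod (isCompact_univ_pi fun _ => hs)).image ?_)
  refine continuous_finset_sum _ fun i _ => ?_
  exact ((continuous_apply i).comp continuous_fst).smul ((continuous_apply i).comp continuous_snd)

/-- a surjective endomorphism `f` of a projective variety is amplified
(`f^*D - D` ample for some divisor class `D`) iff `f_*Z ≢_w Z` for every nonzero
pseudo-effective `1`-cycle class `Z ∈ NE(X)`.  The geometric situation is encoded by:
the finite-dimensional real vector spaces `N1 = N¹(X)` and `N1' = N₁(X)` with a perfect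
intersection pairing `p`, the ample cone `Amp` (open, characterized by Kleiman's
criterion), the closed cone of curves `NE` (salient, spanning, stable under `f_* = ψ`),
and the pullback `φ = f^*` satisfying the projection formula. -/
theorem stmt_5 {N1 N1' : Type*}
    [NormedAddCommGroup N1] [NormedSpace ℝ N1] [FiniteDimensional ℝ N1]
    [NormedAddCommGroup N1'] [NormedSpace ℝ N1'] [FiniteDimensional ℝ N1']
    (p : N1 →ₗ[ℝ] N1' →ₗ[ℝ] ℝ) (hp : Function.Bijective p)
    (Amp : Set N1) (hAmpOpen : IsOpen Amp)
    (NE : ConvexCone ℝ N1') (hNEcl : IsClosed (NE : Set N1'))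
    (hNEsal : ∀ Z ∈ NE, -Z ∈ NE → Z = 0)
    (hNEspan : Submodule.span ℝ (NE : Set N1') = ⊤)
    (Kleiman : ∀ D : N1, D ∈ Amp ↔ ∀ Z ∈ NE, Z ≠ 0 → 0 < p D Z)
    (φ : Module.End ℝ N1) (ψ : Module.End ℝ N1')
    (hψNE : ∀ Z ∈ NE, ψ Z ∈ NE)
    (proj : ∀ (D : N1) (Z : N1'), p (φ D) Z = p D (ψ Z)) :
    (∃ D : N1, φ D - D ∈ Amp) ↔ (∀ Z ∈ NE, ψ Z = Z → Z = 0) := by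
  constructor
  · rintro ⟨D, hD⟩ Z hZ hfix
    by_contra hne
    have h1 : 0 < p (φ D - D) Z := (Kleiman _).mp hD Z hZ hne
    rw [map_sub, LinearMap.sub_apply, proj, hfix] at h1
    rw [sub_self] at h1
    exact lt_irrefl 0 h1
  · intro h
    -- the compact "base" of the cone NE
    set S : Set N1' := (NE : Set N1') ∩ Metric.sphere 0 1 with hSdef
    have hScompact : IsCompact S := ((isCompact_sphere (0:N1') 1).inter_left hNEcl)
    have hconvcomp : IsCompact (convexHull ℝ S) := isCompact_convexHull_of_isCompact hScompact
    have hsubNE : convexHull ℝ S ⊆ (NE : Set N1') :=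
      convexHull_min Set.inter_subset_left NE.convex
    -- 0 ∉ convexHull S, by salience of NE
    have h0 : (0:N1') ∉ convexHull ℝ S := by
      intro h0
      rw [convexHull_eq] at h0
      obtain ⟨ι, t, w, z, hw0, hw1, hzS, hcm⟩ := h0
      -- partial sums over subsets of t lie in NE ∪ {0}
      have key : ∀ u : Finset ι, u ⊆ t → (∑ i ∈ u, w i • z i) ∈ (NE : Set N1') ∪ {0} := by
        intro u
        classical
        induction u using Finset.induction with
        | empty => intro _; simp
        | @insert a u' hnotmem ih =>
          intro hu
          rw [Finset.sum_insert hnotmem]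
          have hmem : (w a • z a) ∈ (NE : Set N1') ∪ {0} := by
            rcases (hw0 a (hu (Finset.mem_insert_self a u'))).lt_or_eq with hpos | hzero
            · exact Or.inl (NE.smul_mem hpos (hzS a (hu (Finset.mem_insert_self a u'))).1)
            · simp [← hzero]
          have hrest := ih fun x hx => hu (Finset.mem_insert_of_mem hx)
          rcases hmem with hm | hm <;> rcases hrest with hr | hr
          · exact Or.inl (NE.add_mem hm hr)
          · simp only [Set.mem_singleton_iff] at hr; rw [hr, add_zero]; exact Or.inl hm
          · simp only [Set.mem_singleton_iff] at hm; rw [hm, zero_add]; exact Or.inl hr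
          · simp only [Set.mem_singleton_iff] at hm hr; simp [hm, hr]
      -- some weight is positive
      have hex : ∃ i ∈ t, 0 < w i := by
        by_contra hno
        push_neg at hno
        have : ∑ i ∈ t, w i = 0 :=
          Finset.sum_eq_zero fun i hi => le_antisymm (hno i hi) (hw0 i hi)
        rw [hw1] at this; norm_num at this
      obtain ⟨i₀, hi₀t, hi₀⟩ := hex
      have hcm' : ∑ i ∈ t, w i • z i = 0 := by
        rwa [Finset.centerMass, hw1, inv_one, one_smul] at hcm
      classical
      have hsplit : w i₀ • z i₀ + ∑ i ∈ t.erase i₀, w i • z i = 0 :=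
        (Finset.add_sum_erase t (fun i => w i • z i) hi₀t).trans hcm'
      have hzmem : w i₀ • z i₀ ∈ (NE : Set N1') := NE.smul_mem hi₀ (hzS i₀ hi₀t).1
      have hrest := key (t.erase i₀) (Finset.erase_subset _ _)
      have hneg : -(w i₀ • z i₀) = ∑ i ∈ t.erase i₀, w i • z i := by
        rw [neg_eq_iff_add_eq_zero]; exact hsplit
      have hz0 : w i₀ • z i₀ = 0 := by
        rcases hrest with hr | hr
        · exact hNEsal _ hzmem (hneg ▸ hr)
        · simp only [Set.mem_singleton_iff] at hr
          rw [hr] at hneg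
          simpa using hneg
      have hzeq : z i₀ = 0 := by
        rcases smul_eq_zero.mp hz0 with h' | h'
        · exact absurd h' (ne_of_gt hi₀)
        · exact h'
      have h1 := (hzS i₀ hi₀t).2
      rw [hzeq] at h1
      simp at h1
    -- the image of convexHull S under ψ - id
    set T : N1' →ₗ[ℝ] N1' := ψ - LinearMap.id with hTdef
    have hTcont : Continuous T := T.continuous_of_finiteDimensional
    set M : Set N1' := T '' (convexHull ℝ S) with hMdef
    have hMconv : Convex ℝ M := (convex_convexHull ℝ S).linear_image T
    have hMcl : IsClosed M := (hconvcomp.image hTcont).isClosed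
    have h0M : (0:N1') ∉ M := by
      rintro ⟨W, hW, hW0⟩
      have hfix : ψ W = W := by
        have hW0' : ψ W - W = 0 := hW0
        rwa [sub_eq_zero] at hW0'
      exact h0 ((h W (hsubNE hW) hfix) ▸ hW)
    obtain ⟨f, u, hfu, hfM⟩ := geometric_hahn_banach_point_closed hMconv hMcl h0M
    have hu : 0 < u := by simpa using hfu
    obtain ⟨D, hDf⟩ := hp.2 (f : N1' →ₗ[ℝ] ℝ)
    refine ⟨D, (Kleiman _).mpr ?_⟩
    intro Z hZ hZ0
    have hnZ : 0 < ‖Z‖ := norm_pos_iff.mpr hZ0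
    set W : N1' := ‖Z‖⁻¹ • Z with hWdef
    have hWS : W ∈ S := by
      constructor
      · exact NE.smul_mem (inv_pos.mpr hnZ) hZ
      · rw [Metric.mem_sphere, dist_zero_right, norm_smul, norm_inv, norm_norm,
          inv_mul_cancel₀ (ne_of_gt hnZ)]
    have hTW : T W ∈ M := ⟨W, subset_convexHull ℝ S hWS, rfl⟩
    have hfTW : u < f (T W) := hfM _ hTW
    have hZW : Z = ‖Z‖ • W := by
      rw [hWdef, smul_smul, mul_inv_cancel₀ (ne_of_gt hnZ), one_smul]
    have h2 : ψ Z - Z = ‖Z‖ • T W := by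
      show ψ Z - Z = ‖Z‖ • (ψ W - W)
      rw [smul_sub, ← map_smul ψ, ← hZW]
    have key : p (φ D - D) Z = ‖Z‖ * f (T W) := by
      rw [map_sub, LinearMap.sub_apply, proj, hDf]
      simp only [ContinuousLinearMap.coe_coe]
      rw [← map_sub f, h2, map_smul, smul_eq_mul]
    rw [key]
    exact mul_pos hnZ (lt_trans hu hfTW)
end

section
/- Let $f:V\to V$ be an invertible linear map of a positive-dimensional real normed vector space $V$ such that $f(C)=C$ for a closed convex cone $C$ spanning $V$ and containing no line. Suppose $f(x)=qx$ for some $x$ in the interior of $C$ and $q>0$, and let $R$ be an isolated extremal ray of $C$. Then some positive power $f^m$ satisfies $f^m(R)=R$ and $f^m|_R=q^m\,\mathrm{id}$. -/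
/-- The ray generated by a vector `x`. -/
def ray {V : Type*} [AddCommGroup V] [Module ℝ V] (x : V) : Set V :=
  {y | ∃ a : ℝ, 0 ≤ a ∧ y = a • x}

/-- `R` is an extremal ray of the cone `C`: it is a ray generated by a nonzero vector,
contained in `C`, and `u + v ∈ R` with `u, v ∈ C` forces `u, v ∈ R`. -/
def IsExtremalRay {V : Type*} [AddCommGroup V] [Module ℝ V] (C R : Set V) : Prop :=
  (∃ x : V, x ≠ 0 ∧ R = ray x) ∧ R ⊆ C ∧
    ∀ u v : V, u ∈ C → v ∈ C → u + v ∈ R → u ∈ R ∧ v ∈ R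

/-- `R` is an isolated extremal ray of `C`: it is extremal and some nonzero point of `R`
has an open neighborhood in which every point either lies on `R` or generates a
non-extremal ray. -/
def IsIsolatedExtremalRay {V : Type*} [AddCommGroup V] [Module ℝ V]
    [TopologicalSpace V] (C R : Set V) : Prop :=
  IsExtremalRay C R ∧ ∃ x ∈ R, x ≠ 0 ∧ ∃ U : Set V, IsOpen U ∧ x ∈ U ∧
    ∀ y ∈ U, y ∈ R ∨ ¬ IsExtremalRay C (ray y)

lemma ray_smul_pos {V : Type*} [AddCommGroup V] [Module ℝ V] (x : V) {a : ℝ} (ha : 0 < a) :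
    ray (a • x) = ray x := by
  ext y
  constructor
  · rintro ⟨b, hb, rfl⟩
    exact ⟨b * a, by positivity, by rw [mul_smul]⟩
  · rintro ⟨b, hb, rfl⟩
    exact ⟨b / a, by positivity, by rw [smul_smul, div_mul_cancel₀ _ ha.ne']⟩

lemma ray_map {V : Type*} [AddCommGroup V] [Module ℝ V] (φ : V ≃ₗ[ℝ] V) (x : V) :
    φ '' ray x = ray (φ x) := by
  ext y
  constructor
  · rintro ⟨z, ⟨a, ha, rfl⟩, rfl⟩
    exact ⟨a, ha, by rw [map_smul]⟩
  · rintro ⟨a, ha, rfl⟩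
    exact ⟨a • x, ⟨a, ha, rfl⟩, by rw [map_smul]⟩

lemma isExtremalRay_map {V : Type*} [AddCommGroup V] [Module ℝ V]
    (C : Set V) (φ : V ≃ₗ[ℝ] V) (hC : ∀ v, v ∈ C ↔ φ v ∈ C) (x : V)
    (h : IsExtremalRay C (ray x)) : IsExtremalRay C (ray (φ x)) := by
  obtain ⟨⟨x₀, hx₀, hray⟩, hsub, hext⟩ := h
  have hx : x ≠ 0 := by
    rintro rfl
    apply hx₀
    have : x₀ ∈ ray (0:V) := hray ▸ ⟨1, zero_le_one, (one_smul _ _).symm⟩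
    obtain ⟨a, _, ha⟩ := this
    simpa using ha
  refine ⟨⟨φ x, fun h0 => hx (by simpa using φ.injective (h0.trans (map_zero φ).symm)), rfl⟩, ?_, ?_⟩
  · rw [← ray_map]
    rintro y ⟨z, hz, rfl⟩
    exact (hC z).mp (hsub hz)
  · intro u v hu hv huv
    rw [← ray_map] at huv ⊢
    obtain ⟨z, hz, hzeq⟩ := huv
    have hu' : φ.symm u ∈ C := by rw [hC]; simpa using hu
    have hv' : φ.symm v ∈ C := by rw [hC]; simpa using hv
    have hsum : φ.symm u + φ.symm v ∈ ray x := by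
      have : φ.symm u + φ.symm v = z := by
        apply φ.injective; simp [hzeq]
      rw [this]; exact hz
    obtain ⟨h1, h2⟩ := hext _ _ hu' hv' hsum
    exact ⟨⟨_, h1, by simp⟩, ⟨_, h2, by simp⟩⟩

lemma K_bounded {V : Type*} [NormedAddCommGroup V] [NormedSpace ℝ V]
    [FiniteDimensional ℝ V] (C : ConvexCone ℝ V) (hCcl : IsClosed (C : Set V))
    (hCsal : ∀ v ∈ C, -v ∈ C → v = 0) (x : V) (hxC : x ∈ C) :
    ∃ M : ℝ, 0 < M ∧ ∀ v : V, x + v ∈ C → x - v ∈ C → ‖v‖ ≤ M := by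
  by_contra h
  push_neg at h
  have h' : ∀ n : ℕ, ∃ v : V, (x + v ∈ C ∧ x - v ∈ C) ∧ (n:ℝ) + 1 < ‖v‖ := by
    intro n
    obtain ⟨v, h1, h2, h3⟩ := h ((n:ℝ)+1) (by positivity)
    exact ⟨v, ⟨h1, h2⟩, h3⟩
  choose v hvK hvn using h'
  have hvpos : ∀ n, 0 < ‖v n‖ := fun n => lt_of_le_of_lt (by positivity) (hvn n)
  set u : ℕ → V := fun n => ‖v n‖⁻¹ • v n with hu
  have husphere : ∀ n, u n ∈ Metric.sphere (0:V) 1 := by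
    intro n
    simp [hu, norm_smul, abs_of_pos (inv_pos.mpr (hvpos n)),
      inv_mul_cancel₀ (hvpos n).ne']
  obtain ⟨L, hL, φ, hφ, hconv⟩ :=
    (isCompact_sphere (0:V) 1).tendsto_subseq husphere
  have hLnorm : ‖L‖ = 1 := by simpa using hL
  have key : ∀ t : ℝ, 0 < t → x + t • L ∈ C ∧ x - t • L ∈ C := by
    intro t ht
    have h1 : ∀ᶠ n in Filter.atTop, t ≤ ‖v (φ n)‖ := by
      filter_upwards [Filter.eventually_ge_atTop (Nat.ceil t)] with n hn
      calc t ≤ (Nat.ceil t : ℝ) := Nat.le_ceil t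
        _ ≤ (n:ℝ) := by exact_mod_cast hn
        _ ≤ (φ n : ℝ) := by exact_mod_cast hφ.le_apply
        _ ≤ (φ n : ℝ) + 1 := by linarith
        _ ≤ ‖v (φ n)‖ := (hvn (φ n)).le
    have hmem : ∀ᶠ n in Filter.atTop, x + t • u (φ n) ∈ C ∧ x - t • u (φ n) ∈ C := by
      filter_upwards [h1] with n hn
      set s : ℝ := t / ‖v (φ n)‖ with hs
      have hs0 : 0 ≤ s := by positivity
      have hs1 : s ≤ 1 := by
        rw [hs, div_le_one (hvpos _)]; exact hn
      have heq : x + t • u (φ n) = (1 - s) • x + s • (x + v (φ n)) := by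
        simp only [hu, smul_add, smul_smul]
        rw [hs]
        module
      have heq2 : x - t • u (φ n) = (1 - s) • x + s • (x - v (φ n)) := by
        simp only [hu, smul_sub, smul_smul]
        rw [hs]
        module
      constructor
      · rw [heq]
        exact C.convex hxC (hvK (φ n)).1 (by linarith) hs0 (by ring)
      · rw [heq2]
        exact C.convex hxC (hvK (φ n)).2 (by linarith) hs0 (by ring)
    have hlim1 : Filter.Tendsto (fun n => x + t • u (φ n)) Filter.atTop (nhds (x + t • L)) :=
      Filter.Tendsto.const_add _ (hconv.const_smul t)
    have hlim2 : Filter.Tendsto (fun n => x - t • u (φ n)) Filter.atTop (nhds (x - t • L)) :=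
      Filter.Tendsto.const_sub _ (hconv.const_smul t)
    exact ⟨hCcl.mem_of_tendsto hlim1 (hmem.mono fun n h => h.1),
           hCcl.mem_of_tendsto hlim2 (hmem.mono fun n h => h.2)⟩
  have hLC : L ∈ C ∧ -L ∈ C := by
    have hseq : ∀ n : ℕ, ((n:ℝ)+1)⁻¹ • x + L ∈ C ∧ ((n:ℝ)+1)⁻¹ • x - L ∈ C := by
      intro n
      have hn : (0:ℝ) < (n:ℝ)+1 := by positivity
      obtain ⟨h1, h2⟩ := key ((n:ℝ)+1) hn
      constructor
      · have := C.smul_mem (inv_pos.mpr hn) h1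
        rwa [smul_add, smul_smul, inv_mul_cancel₀ hn.ne', one_smul] at this
      · have := C.smul_mem (inv_pos.mpr hn) h2
        rwa [smul_sub, smul_smul, inv_mul_cancel₀ hn.ne', one_smul] at this
    have hlim : Filter.Tendsto (fun n : ℕ => (((n:ℝ)+1)⁻¹ • x : V)) Filter.atTop (nhds 0) := by
      have : Filter.Tendsto (fun n : ℕ => ((n:ℝ)+1)⁻¹) Filter.atTop (nhds 0) := by
        simpa using (tendsto_one_div_add_atTop_nhds_zero_nat : Filter.Tendsto (fun n : ℕ => 1 / ((n:ℝ) + 1)) Filter.atTop (nhds 0))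
      simpa using this.smul_const x
    constructor
    · have := (hlim.add_const L)
      rw [zero_add] at this
      exact hCcl.mem_of_tendsto this (Filter.Eventually.of_forall fun n => (hseq n).1)
    · have := (hlim.sub_const L)
      rw [zero_sub] at this
      exact hCcl.mem_of_tendsto this (Filter.Eventually.of_forall fun n => (hseq n).2)
  have : L = 0 := hCsal L hLC.1 hLC.2
  rw [this] at hLnorm
  simp at hLnorm


/-- if an invertible linear map `f` of a positive-dimensional real normed
space preserves a closed convex cone `C` (spanning, no line), satisfies `f x = q • x`
for some interior point `x` and `q > 0`, and `R` is an isolated extremal ray of `C`,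
then some positive power `f^m` satisfies `f^m(R) = R` and `f^m = q^m • id` on `R`. -/
theorem stmt_6 {V : Type*} [NormedAddCommGroup V] [NormedSpace ℝ V]
    [FiniteDimensional ℝ V] (hV : 0 < Module.finrank ℝ V)
    (f : Module.End ℝ V) (hf : Function.Bijective f)
    (C : ConvexCone ℝ V) (hCcl : IsClosed (C : Set V))
    (hCspan : Submodule.span ℝ (C : Set V) = ⊤)
    (hCsal : ∀ v ∈ C, -v ∈ C → v = 0)
    (hfC : f '' (C : Set V) = (C : Set V))
    (x : V) (hx : x ∈ interior (C : Set V)) (q : ℝ) (hq : 0 < q) (hfx : f x = q • x)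
    (R : Set V) (hR : IsIsolatedExtremalRay (C : Set V) R) :
    ∃ m : ℕ, 0 < m ∧ (f ^ m) '' R = R ∧ ∀ y ∈ R, (f ^ m) y = q ^ m • y := by
  -- the linear automorphism associated with f
  set e : V ≃ₗ[ℝ] V := LinearEquiv.ofBijective f hf with he
  have he_apply : ∀ v : V, e v = f v := fun v => rfl
  -- e and e⁻¹ preserve C
  have hCe : ∀ v : V, v ∈ C ↔ e v ∈ C := by
    intro v
    constructor
    · intro hv
      have : e v ∈ f '' (C : Set V) := ⟨v, hv, rfl⟩
      rwa [hfC] at this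
    · intro hv
      have hv' : e v ∈ (C : Set V) := hv
      rw [← hfC] at hv'
      obtain ⟨w, hw, hweq⟩ := hv'
      have : w = v := hf.1 (by rw [hweq]; rfl)
      rw [← this]
      exact hw
  have hCesymm : ∀ v : V, v ∈ C ↔ e.symm v ∈ C := by
    intro v
    rw [hCe (e.symm v), e.apply_symm_apply]
  have hinv_apply : ∀ v : V, (e⁻¹ : V ≃ₗ[ℝ] V) v = e.symm v := fun v => rfl
  -- zpowers of e preserve C
  have hCen : ∀ n : ℤ, ∀ v : V, v ∈ C ↔ (e ^ n) v ∈ C := by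
    intro n
    induction n using Int.induction_on with
    | zero => intro v; simp
    | succ k ih =>
      intro v
      have : (e ^ ((k:ℤ)+1)) v = (e ^ (k:ℤ)) (e v) := by
        rw [zpow_add_one]; rfl
      rw [this, ← ih (e v), ← hCe]
    | pred k ih =>
      intro v
      have : (e ^ (-(k:ℤ)-1)) v = (e ^ (-(k:ℤ))) (e.symm v) := by
        rw [sub_eq_add_neg, zpow_add, zpow_neg_one]; rfl
      rw [this, ← ih (e.symm v), ← hCesymm]
  -- action of powers of e on x
  have hesymmx : e.symm x = q⁻¹ • x := by
    apply e.injective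
    rw [e.apply_symm_apply, map_smul, he_apply, hfx, smul_smul, inv_mul_cancel₀ hq.ne',
      one_smul]
  have hex : ∀ n : ℤ, (e ^ n) x = (q ^ n) • x := by
    intro n
    induction n using Int.induction_on with
    | zero => simp
    | succ k ih =>
      have h1 : (e ^ ((k:ℤ)+1)) x = (e ^ (k:ℤ)) (e x) := by rw [zpow_add_one]; rfl
      rw [h1, he_apply, hfx, map_smul, ih, smul_smul, zpow_add_one₀ hq.ne', mul_comm]
    | pred k ih =>
      have h1 : (e ^ (-(k:ℤ)-1)) x = (e ^ (-(k:ℤ))) (e.symm x) := by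
        rw [sub_eq_add_neg, zpow_add, zpow_neg_one]; rfl
      rw [h1, hesymmx, map_smul, ih, smul_smul, zpow_sub_one₀ hq.ne', mul_comm]
  -- the normalized maps T n
  set T : ℤ → V → V := fun n v => (q ^ n)⁻¹ • (e ^ n) v with hT
  have hqzpow : ∀ n : ℤ, (0:ℝ) < q ^ n := fun n => zpow_pos hq n
  have hT0 : ∀ v, T 0 v = v := by intro v; simp [hT]
  have hTadd : ∀ m n : ℤ, ∀ v, T m (T n v) = T (m + n) v := by
    intro m n v
    simp only [hT]
    rw [map_smul, smul_smul]
    have h2 : (e ^ m) ((e ^ n) v) = (e ^ (m + n)) v := by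
      rw [zpow_add]; rfl
    rw [h2, ← mul_inv, ← zpow_add₀ hq.ne']
  have hTsub : ∀ n : ℤ, ∀ u v : V, T n (u - v) = T n u - T n v := by
    intro n u v
    simp [hT, map_sub, smul_sub]
  have hTsmul : ∀ n : ℤ, ∀ (c : ℝ) (v : V), T n (c • v) = c • T n v := by
    intro n c v
    simp only [hT, map_smul]
    rw [smul_comm]
  have hTzero : ∀ n : ℤ, T n 0 = 0 := by intro n; simp [hT]
  -- T n maps the order interval K into itself
  have hTK : ∀ n : ℤ, ∀ v : V, x + v ∈ C → x - v ∈ C → x + T n v ∈ C ∧ x - T n v ∈ C := by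
    intro n v h1 h2
    have e1 : (e ^ n) (x + v) ∈ C := (hCen n _).mp h1
    have e2 : (e ^ n) (x - v) ∈ C := (hCen n _).mp h2
    have s1 := C.smul_mem (inv_pos.mpr (hqzpow n)) e1
    have s2 := C.smul_mem (inv_pos.mpr (hqzpow n)) e2
    rw [map_add, hex, smul_add, smul_smul, inv_mul_cancel₀ (hqzpow n).ne', one_smul] at s1
    rw [map_sub, hex, smul_sub, smul_smul, inv_mul_cancel₀ (hqzpow n).ne', one_smul] at s2
    exact ⟨s1, s2⟩
  -- choose ε with small ball around x inside C
  obtain ⟨ε, hε, hball⟩ := Metric.isOpen_iff.mp isOpen_interior x hx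
  have hKball : ∀ v : V, ‖v‖ ≤ ε/2 → x + v ∈ C ∧ x - v ∈ C := by
    intro v hv
    constructor
    · refine interior_subset (hball ?_)
      rw [Metric.mem_ball, dist_eq_norm]
      calc ‖x + v - x‖ = ‖v‖ := by rw [add_sub_cancel_left]
        _ ≤ ε/2 := hv
        _ < ε := by linarith
    · refine interior_subset (hball ?_)
      rw [Metric.mem_ball, dist_eq_norm]
      have hxv : x - v - x = -v := by abel
      calc ‖x - v - x‖ = ‖v‖ := by rw [hxv, norm_neg]
        _ ≤ ε/2 := hv
        _ < ε := by linarith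
  obtain ⟨M, hM, hMbd⟩ := K_bounded C hCcl hCsal x (interior_subset hx)
  set CB : ℝ := 2 * M / ε with hCB
  have hCBpos : 0 < CB := by positivity
  -- norm bounds on all T n
  have hTbound : ∀ n : ℤ, ∀ v : V, ‖T n v‖ ≤ CB * ‖v‖ := by
    intro n v
    rcases eq_or_ne v 0 with rfl | hv
    · simp [hTzero]
    have hnv : 0 < ‖v‖ := norm_pos_iff.mpr hv
    set c : ℝ := (ε/2) / ‖v‖ with hc
    have hcpos : 0 < c := by positivity
    have hcv : ‖c • v‖ ≤ ε/2 := by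
      rw [norm_smul, Real.norm_of_nonneg hcpos.le, hc, div_mul_cancel₀ _ hnv.ne']
    obtain ⟨k1, k2⟩ := hKball _ hcv
    obtain ⟨m1, m2⟩ := hTK n _ k1 k2
    have := hMbd _ m1 m2
    rw [hTsmul, norm_smul, Real.norm_of_nonneg hcpos.le] at this
    rw [← le_div_iff₀' hcpos] at this
    calc ‖T n v‖ ≤ M / c := this
      _ = CB * ‖v‖ := by rw [hc, hCB]; field_simp
  have hTlower : ∀ n : ℤ, ∀ v : V, ‖v‖ ≤ CB * ‖T n v‖ := by
    intro n v
    have := hTbound (-n) (T n v)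
    rwa [hTadd, neg_add_cancel, hT0] at this
  -- extract isolated-ray data
  obtain ⟨hRext, x₀, hx₀R, hx₀ne, U, hUopen, hx₀U, hU⟩ := hR
  obtain ⟨r₀, hr₀ne, hRray⟩ := hRext.1
  have hRx₀ : R = ray x₀ := by
    have hmem : x₀ ∈ ray r₀ := hRray ▸ hx₀R
    obtain ⟨a, ha, hax⟩ := hmem
    have ha' : 0 < a := by
      rcases ha.lt_or_eq with h | h
      · exact h
      · exact absurd (by rw [hax, ← h, zero_smul]) hx₀ne
    rw [hRray, ← ray_smul_pos r₀ ha', ← hax]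
  have hextx₀ : IsExtremalRay (C : Set V) (ray x₀) := hRx₀ ▸ hRext
  have hx₀pos : 0 < ‖x₀‖ := norm_pos_iff.mpr hx₀ne
  -- the orbit sequence
  set w : ℕ → V := fun n => T n x₀ with hw
  have hwball : ∀ n : ℕ, w n ∈ Metric.closedBall (0:V) (CB * ‖x₀‖) := by
    intro n
    rw [Metric.mem_closedBall, dist_zero_right]
    exact hTbound n x₀
  obtain ⟨L, hL, φ, hφ, hconv⟩ :=
    (isCompact_closedBall (0:V) (CB * ‖x₀‖)).tendsto_subseq hwball
  obtain ⟨d, hd, hdball⟩ := Metric.isOpen_iff.mp hUopen x₀ hx₀U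
  obtain ⟨N, hN⟩ := Metric.tendsto_atTop.mp hconv (d / (2 * (CB + 1))) (by positivity)
  set n₁ : ℕ := φ N with hn₁
  set n₂ : ℕ := φ (N + 1) with hn₂
  have hn12 : n₁ < n₂ := hφ (Nat.lt_succ_self N)
  have hdist : ‖w n₁ - w n₂‖ < d / (CB + 1) := by
    have h1 := hN N (le_refl N)
    have h2 := hN (N + 1) (Nat.le_succ N)
    simp only [Function.comp] at h1 h2
    calc ‖w n₁ - w n₂‖ = dist (w n₁) (w n₂) := (dist_eq_norm _ _).symm
      _ ≤ dist (w n₁) L + dist (w n₂) L := dist_triangle_right _ _ _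
      _ < d / (2 * (CB + 1)) + d / (2 * (CB + 1)) := add_lt_add h1 h2
      _ = d / (CB + 1) := by
          have h3 : CB + 1 ≠ 0 := by positivity
          field_simp
          ring
  set p : ℤ := (n₂ : ℤ) - (n₁ : ℤ) with hp
  have hppos : 0 < p := by omega
  have hclose : ‖x₀ - T p x₀‖ < d := by
    have key : x₀ - T p x₀ = T (-(n₁:ℤ)) (w n₁ - w n₂) := by
      rw [hTsub]
      have e1 : T (-(n₁:ℤ)) (w n₁) = x₀ := by
        show T (-(n₁:ℤ)) (T (n₁:ℤ) x₀) = x₀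
        rw [hTadd, neg_add_cancel, hT0]
      have e2 : T (-(n₁:ℤ)) (w n₂) = T p x₀ := by
        show T (-(n₁:ℤ)) (T (n₂:ℤ) x₀) = T p x₀
        rw [hTadd]
        congr 1
        omega
      rw [e1, e2]
    calc ‖x₀ - T p x₀‖ = ‖T (-(n₁:ℤ)) (w n₁ - w n₂)‖ := by rw [key]
      _ ≤ CB * ‖w n₁ - w n₂‖ := hTbound _ _
      _ < CB * (d / (CB + 1)) := by
          exact mul_lt_mul_of_pos_left hdist hCBpos
      _ = d * (CB / (CB + 1)) := by ring
      _ < d * 1 := by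
          apply mul_lt_mul_of_pos_left _ hd
          rw [div_lt_one (by positivity)]
          linarith
      _ = d := mul_one d
  have hTpU : T p x₀ ∈ U := by
    apply hdball
    rw [Metric.mem_ball, dist_eq_norm, ← norm_neg, neg_sub]
    exact hclose
  -- the ray of T p x₀ is extremal
  have hTray : ray (T p x₀) = ray ((e ^ p) x₀) := by
    show ray ((q ^ p)⁻¹ • (e ^ p) x₀) = _
    exact ray_smul_pos _ (inv_pos.mpr (hqzpow p))
  have hextTp : IsExtremalRay (C : Set V) (ray (T p x₀)) := by
    rw [hTray]
    exact isExtremalRay_map _ (e ^ p) (fun v => hCen p v) x₀ hextx₀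
  have hTpR : T p x₀ ∈ R := by
    rcases hU _ hTpU with h | h
    · exact h
    · exact absurd hextTp h
  have hTpmem : T p x₀ ∈ ray x₀ := hRx₀ ▸ hTpR
  obtain ⟨b, hb0, hbeq⟩ := hTpmem
  have hTpne : T p x₀ ≠ 0 := by
    intro h0
    apply hx₀ne
    have h1 := congrArg (T (-p)) h0
    rwa [hTadd, neg_add_cancel, hT0, hTzero] at h1
  have hbpos : 0 < b := by
    rcases hb0.lt_or_eq with h | h
    · exact h
    · exact absurd (by rw [hbeq, ← h, zero_smul]) hTpne
  -- powers of T p scale x₀ by powers of b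
  have hTk : ∀ k : ℕ, T ((k:ℤ) * p) x₀ = b ^ k • x₀ := by
    intro k
    induction k with
    | zero => simpa using hT0 x₀
    | succ k ih =>
      have hcast : ((k+1:ℕ):ℤ) * p = p + (k:ℤ) * p := by push_cast; ring
      rw [hcast, ← hTadd, ih, hTsmul, hbeq, smul_smul, ← pow_succ]
  have hub : ∀ k : ℕ, b ^ k ≤ CB := by
    intro k
    have h1 := hTbound ((k:ℤ) * p) x₀
    rw [hTk k, norm_smul, Real.norm_of_nonneg (pow_nonneg hb0 k)] at h1
    exact le_of_mul_le_mul_right (by linarith) hx₀pos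
  have hlb : ∀ k : ℕ, 1 ≤ CB * b ^ k := by
    intro k
    have h1 := hTlower ((k:ℤ) * p) x₀
    rw [hTk k, norm_smul, Real.norm_of_nonneg (pow_nonneg hb0 k)] at h1
    nlinarith
  have hb1 : b = 1 := by
    by_contra hbne
    rcases lt_or_gt_of_ne hbne with hlt | hgt
    · obtain ⟨k, hk⟩ := exists_pow_lt_of_lt_one (show (0:ℝ) < 1/CB by positivity) hlt
      have h1 := hlb k
      have h2 : CB * b ^ k < CB * (1 / CB) := mul_lt_mul_of_pos_left hk hCBpos
      rw [mul_one_div, div_self hCBpos.ne'] at h2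
      linarith
    · obtain ⟨k, hk⟩ := pow_unbounded_of_one_lt CB hgt
      exact absurd (hub k) (not_le.mpr hk)
  -- so e ^ p scales x₀ by q ^ p
  have hep : (e ^ p) x₀ = (q ^ p) • x₀ := by
    have h1 : (q ^ p)⁻¹ • (e ^ p) x₀ = x₀ := by
      have h2 : T p x₀ = x₀ := by rw [hbeq, hb1, one_smul]
      exact h2
    rwa [inv_smul_eq_iff₀ (hqzpow p).ne'] at h1
  -- translate to f
  have hefn : ∀ (k : ℕ) (v : V), (e ^ (k:ℤ)) v = (f ^ k) v := by
    intro k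
    induction k with
    | zero => intro v; simp
    | succ k ih =>
      intro v
      have h1 : (e ^ ((k:ℤ)+1)) v = (e ^ (k:ℤ)) (e v) := by rw [zpow_add_one]; rfl
      have h2 : (f ^ (k+1)) v = (f ^ k) (f v) := by rw [pow_succ]; rfl
      push_cast
      rw [h1, h2, he_apply, ih]
  set m₀ : ℕ := n₂ - n₁ with hm₀
  have hm₀pos : 0 < m₀ := by omega
  have hpm : p = (m₀ : ℤ) := by omega
  have hfx₀ : (f ^ m₀) x₀ = q ^ m₀ • x₀ := by
    have h1 := hep
    rw [hpm, hefn, zpow_natCast] at h1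
    exact h1
  refine ⟨m₀, hm₀pos, ?_, ?_⟩
  · rw [hRx₀]
    ext y
    constructor
    · rintro ⟨z, ⟨a, ha, rfl⟩, rfl⟩
      exact ⟨a * q ^ m₀, by positivity, by rw [map_smul, hfx₀, smul_smul]⟩
    · rintro ⟨a, ha, rfl⟩
      refine ⟨(a / q ^ m₀) • x₀, ⟨a / q ^ m₀, by positivity, rfl⟩, ?_⟩
      rw [map_smul, hfx₀, smul_smul, div_mul_cancel₀ a (by positivity : (q:ℝ) ^ m₀ ≠ 0)]
  · intro y hy
    rw [hRx₀] at hy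
    obtain ⟨a, ha, rfl⟩ := hy
    rw [map_smul, hfx₀, smul_smul, smul_smul, mul_comm]
end

section
/- Let $C$ be a closed convex cone in a positive-dimensional real normed vector space $V$ such that $C$ spans $V$ and contains no line, and let $x\in C$ be nonzero. Then there exists a unique minimal closed extremal face $F$ of $C$ containing $x$, and moreover $x$ lies in the relative interior of $F$. -/
/-!
The minimal face through `x` is `F = {y ∈ C | t • x - y ∈ C for some t > 0}`. It is an extremal
subcone, and it lies in every face `F'` through `x` because `t • x = (t • x - y) + y ∈ F'`.
Every `w ∈ span F` satisfies `t • x ± w ∈ C` for some `t > 0`, so `F = C ∩ span F` is closed.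
Inside `span F` the convex set `F` has an interior point `y`; as `t • x - y ∈ F` for some `t > 0`,
the point `t • x`, and hence `x`, is interior as well.
-/

open Pointwise

/-- `F` is a closed extremal face of the cone `C`: a closed subcone of `C` such that
`u + v ∈ F` with `u, v ∈ C` forces `u, v ∈ F`. -/
def IsClosedExtremalFace {V : Type*} [AddCommGroup V] [Module ℝ V]
    [TopologicalSpace V] (C F : Set V) : Prop :=
  F ⊆ C ∧ IsClosed F ∧
    (∀ u v : V, u ∈ F → v ∈ F → u + v ∈ F) ∧
    (∀ (a : ℝ), 0 ≤ a → ∀ u ∈ F, a • u ∈ F) ∧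
    (∀ u v : V, u ∈ C → v ∈ C → u + v ∈ F → u ∈ F ∧ v ∈ F)

namespace ConvexCone

section Algebra

variable {V : Type*} [AddCommGroup V] [Module ℝ V] {C : ConvexCone ℝ V} {x y u v : V}

/-- The `y ∈ C` with `y ≤ t • x` for some `t > 0` in the order of `C`: the smallest face of `C`
containing `x`. -/
def faceOf (C : ConvexCone ℝ V) (x : V) : ConvexCone ℝ V where
  carrier := {y | y ∈ C ∧ ∃ t : ℝ, 0 < t ∧ t • x - y ∈ C}
  smul_mem' c hc y := fun ⟨hyC, t, ht, hty⟩ =>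
    ⟨C.smul_mem hc hyC, c * t, mul_pos hc ht, by
      rw [mul_smul, ← smul_sub]; exact C.smul_mem hc hty⟩
  add_mem' y := fun ⟨hyC, t, ht, hty⟩ z ⟨hzC, s, hs, hsz⟩ =>
    ⟨C.add_mem hyC hzC, t + s, add_pos ht hs, by
      rw [add_smul, add_sub_add_comm]; exact C.add_mem hty hsz⟩

theorem faceOf_le : C.faceOf x ≤ C := fun _ hy => hy.1

theorem self_mem_faceOf (hx : x ∈ C) : x ∈ C.faceOf x :=
  ⟨hx, 2, two_pos, by rwa [two_smul, add_sub_cancel_right]⟩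

theorem zero_mem_faceOf (hC : C.Pointed) (hx : x ∈ C) : (0 : V) ∈ C.faceOf x :=
  ⟨hC, 1, one_pos, by rwa [one_smul, sub_zero]⟩

theorem left_mem_faceOf_of_add_mem (hu : u ∈ C) (hv : v ∈ C) (huv : u + v ∈ C.faceOf x) :
    u ∈ C.faceOf x := by
  obtain ⟨-, t, ht, htuv⟩ := huv
  refine ⟨hu, t, ht, ?_⟩
  rw [show t • x - u = (t • x - (u + v)) + v by abel]
  exact C.add_mem htuv hv

theorem smul_sub_mem_faceOf (hx : x ∈ C) (hy : y ∈ C.faceOf x) :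
    ∃ t : ℝ, 0 < t ∧ t • x - y ∈ C.faceOf x := by
  obtain ⟨hyC, t, ht, hty⟩ := hy
  refine ⟨t, ht, hty, t + 1, by linarith, ?_⟩
  rw [show (t + 1) • x - (t • x - y) = x + y by module]
  exact C.add_mem hx hyC

theorem faceOf_subset_of_isExtremal {F : Set V}
    (hF_smul : ∀ a : ℝ, 0 ≤ a → ∀ u ∈ F, a • u ∈ F)
    (hF_ext : ∀ u v : V, u ∈ C → v ∈ C → u + v ∈ F → u ∈ F ∧ v ∈ F) (hxF : x ∈ F) :
    (C.faceOf x : Set V) ⊆ F := by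
  rintro y ⟨hyC, t, ht, hty⟩
  have htx : (t • x - y) + y ∈ F := by
    rw [sub_add_cancel]; exact hF_smul t ht.le x hxF
  exact (hF_ext _ _ hty hyC htx).2

theorem exists_smul_sub_mem_of_mem_span_faceOf (hx : x ∈ C)
    {w : V} (hw : w ∈ Submodule.span ℝ (C.faceOf x : Set V)) :
    ∃ t : ℝ, 0 < t ∧ t • x - w ∈ C ∧ t • x + w ∈ C := by
  induction hw using Submodule.span_induction with
  | mem y hy =>
    obtain ⟨hyC, t, ht, hty⟩ := hy
    exact ⟨t, ht, hty, C.add_mem (C.smul_mem ht hx) hyC⟩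
  | zero => exact ⟨1, one_pos, by simpa using hx, by simpa using hx⟩
  | add y z _ _ hy hz =>
    obtain ⟨t, ht, hty, hty'⟩ := hy
    obtain ⟨s, hs, hsz, hsz'⟩ := hz
    refine ⟨t + s, add_pos ht hs, ?_, ?_⟩
    · rw [add_smul, add_sub_add_comm]; exact C.add_mem hty hsz
    · rw [add_smul, add_add_add_comm]; exact C.add_mem hty' hsz'
  | smul a y _ hy =>
    obtain ⟨t, ht, hty, hty'⟩ := hy
    rcases lt_trichotomy a 0 with ha | rfl | ha
    · refine ⟨-a * t, mul_pos (neg_pos.2 ha) ht, ?_, ?_⟩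
      · rw [show (-a * t) • x - a • y = -a • (t • x + y) by module]
        exact C.smul_mem (neg_pos.2 ha) hty'
      · rw [show (-a * t) • x + a • y = -a • (t • x - y) by module]
        exact C.smul_mem (neg_pos.2 ha) hty
    · exact ⟨1, one_pos, by simpa using hx, by simpa using hx⟩
    · refine ⟨a * t, mul_pos ha ht, ?_, ?_⟩
      · rw [mul_smul, ← smul_sub]; exact C.smul_mem ha hty
      · rw [mul_smul, ← smul_add]; exact C.smul_mem ha hty'

theorem faceOf_eq_inter_span (hx : x ∈ C) :
    (C.faceOf x : Set V) = (C : Set V) ∩ Submodule.span ℝ (C.faceOf x : Set V) := by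
  refine Set.Subset.antisymm (fun y hy => ⟨hy.1, Submodule.subset_span hy⟩) ?_
  rintro y ⟨hyC, hyW⟩
  obtain ⟨t, ht, hty, -⟩ := exists_smul_sub_mem_of_mem_span_faceOf hx hyW
  exact ⟨hyC, t, ht, hty⟩

end Algebra

section Topology

theorem pointed_of_isClosed {V : Type*} [AddCommGroup V] [Module ℝ V] [TopologicalSpace V]
    [ContinuousSMul ℝ V] {C : ConvexCone ℝ V} (hC : IsClosed (C : Set V)) {x : V} (hx : x ∈ C) :
    C.Pointed := by
  have hlim : Filter.Tendsto (fun c : ℝ => c • x) (nhdsWithin 0 (Set.Ioi 0)) (nhds 0) := by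
    simpa using ((Filter.tendsto_id (x := nhds (0 : ℝ))).smul_const x).mono_left
      nhdsWithin_le_nhds
  exact hC.mem_of_tendsto hlim (eventually_mem_nhdsWithin.mono fun c hc => C.smul_mem hc hx)

variable {E : Type*} [NormedAddCommGroup E] [NormedSpace ℝ E]

theorem smul_mem_interior {K : ConvexCone ℝ E} {c : ℝ} (hc : 0 < c) {x : E}
    (hx : x ∈ interior (K : Set E)) : c • x ∈ interior (K : Set E) := by
  have : c • x ∈ interior (c • (K : Set E)) := by
    rw [interior_smul₀ hc.ne']; exact Set.smul_mem_smul_set hx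
  exact interior_mono (Set.smul_set_subset_iff.2 fun y hy => K.smul_mem hc hy) this

variable [FiniteDimensional ℝ E]

theorem interior_nonempty_of_span_eq_top {K : ConvexCone ℝ E} (hK : K.Pointed)
    (hspan : Submodule.span ℝ (K : Set E) = ⊤) : (interior (K : Set E)).Nonempty := by
  rw [K.convex.interior_nonempty_iff_affineSpan_eq_top,
    AffineSubspace.affineSpan_eq_top_iff_vectorSpan_eq_top_of_nonempty ℝ E E ⟨0, hK⟩,
    vectorSpan_eq_span_vsub_set_right ℝ hK]
  simpa using hspan

theorem mem_interior_of_forall_smul_sub_mem {K : ConvexCone ℝ E} (hK : K.Pointed)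
    (hspan : Submodule.span ℝ (K : Set E) = ⊤) {x : E}
    (hx : ∀ y ∈ K, ∃ t : ℝ, 0 < t ∧ t • x - y ∈ K) : x ∈ interior (K : Set E) := by
  obtain ⟨y, hy⟩ := interior_nonempty_of_span_eq_top hK hspan
  obtain ⟨t, ht, hty⟩ := hx y (interior_subset hy)
  -- `(t / 2) • x` is the midpoint of `t • x - y ∈ K` and the interior point `y`.
  have hmid : (t / 2) • x ∈ interior (K : Set E) := by
    have := K.convex.combo_self_interior_mem_interior hty hy (a := 1 / 2) (b := 1 / 2)
      (by norm_num) (by norm_num) (by norm_num)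
    rwa [show (1 / 2 : ℝ) • (t • x - y) + (1 / 2 : ℝ) • y = (t / 2) • x by module] at this
  simpa [smul_smul, ht.ne'] using smul_mem_interior (inv_pos.2 (half_pos ht)) hmid

variable {C : ConvexCone ℝ E} {x : E}

theorem isClosed_faceOf (hC : IsClosed (C : Set E)) (hx : x ∈ C) :
    IsClosed (C.faceOf x : Set E) := by
  rw [faceOf_eq_inter_span hx]
  exact hC.inter (Submodule.closed_of_finiteDimensional _)

theorem isClosedExtremalFace_faceOf (hC : IsClosed (C : Set E)) (hx : x ∈ C) :
    IsClosedExtremalFace (C : Set E) (C.faceOf x) := by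
  refine ⟨faceOf_le, isClosed_faceOf hC hx, fun u v hu hv => add_mem hu hv, ?_, ?_⟩
  · intro a ha u hu
    rcases ha.eq_or_lt with rfl | ha
    · simpa using zero_mem_faceOf (pointed_of_isClosed hC hx) hx
    · exact (C.faceOf x).smul_mem ha hu
  · intro u v hu hv huv
    exact ⟨left_mem_faceOf_of_add_mem hu hv huv,
      left_mem_faceOf_of_add_mem hv hu (by rwa [add_comm])⟩

theorem exists_pos_mem_faceOf_of_mem_span_of_norm_sub_lt (hC : IsClosed (C : Set E))
    (hx : x ∈ C) :
    ∃ ε : ℝ, 0 < ε ∧ ∀ z ∈ Submodule.span ℝ (C.faceOf x : Set E), ‖z - x‖ < ε →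
      z ∈ C.faceOf x := by
  set W := Submodule.span ℝ (C.faceOf x : Set E)
  set K := (C.faceOf x).comap W.subtype
  have hxW : x ∈ W := Submodule.subset_span (self_mem_faceOf hx)
  have hint : (⟨x, hxW⟩ : W) ∈ interior (K : Set W) := by
    refine mem_interior_of_forall_smul_sub_mem (K := K)
      (mem_comap.2 (zero_mem_faceOf (pointed_of_isClosed hC hx) hx))
      Submodule.span_span_coe_preimage fun y hy => ?_
    obtain ⟨t, ht, hty⟩ := smul_sub_mem_faceOf hx hy
    exact ⟨t, ht, hty⟩
  obtain ⟨ε, hε, hball⟩ := Metric.isOpen_iff.1 isOpen_interior _ hint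
  refine ⟨ε, hε, fun z hzW hzx => interior_subset (s := (K : Set W))
    (hball (show (⟨z, hzW⟩ : W) ∈ Metric.ball _ ε from ?_))⟩
  rwa [Metric.mem_ball, Subtype.dist_eq, dist_eq_norm]

end Topology

end ConvexCone

theorem stmt_7_general {V : Type*} [NormedAddCommGroup V] [NormedSpace ℝ V]
    [FiniteDimensional ℝ V]
    (C : ConvexCone ℝ V) (hCcl : IsClosed (C : Set V))
    (x : V) (hx : x ∈ C) :
    ∃ F : Set V, IsClosedExtremalFace (C : Set V) F ∧ x ∈ F ∧
      (∀ F' : Set V, IsClosedExtremalFace (C : Set V) F' → x ∈ F' → F ⊆ F') ∧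
      (∃ ε : ℝ, 0 < ε ∧ ∀ z ∈ Submodule.span ℝ F, ‖z - x‖ < ε → z ∈ F) ∧
      (∀ F'' : Set V, IsClosedExtremalFace (C : Set V) F'' → x ∈ F'' →
        (∀ F' : Set V, IsClosedExtremalFace (C : Set V) F' → x ∈ F' → F'' ⊆ F') →
        F'' = F) := by
  have hface := ConvexCone.isClosedExtremalFace_faceOf hCcl hx
  have hmin : ∀ F' : Set V, IsClosedExtremalFace (C : Set V) F' → x ∈ F' →
      (C.faceOf x : Set V) ⊆ F' :=
    fun F' ⟨_, _, _, hsmul, hext⟩ hxF' => ConvexCone.faceOf_subset_of_isExtremal hsmul hext hxF'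
  have hxF := ConvexCone.self_mem_faceOf hx
  refine ⟨C.faceOf x, hface, hxF, hmin,
    ConvexCone.exists_pos_mem_faceOf_of_mem_span_of_norm_sub_lt hCcl hx, ?_⟩
  exact fun F'' hF'' hxF'' hmin'' => (hmin'' _ hface hxF).antisymm (hmin F'' hF'' hxF'')

/-- for a closed convex cone `C` spanning a positive-dimensional real
normed vector space and containing no line, and a nonzero `x ∈ C`, there exists a unique
minimal closed extremal face `F` of `C` containing `x`; moreover `x` lies in the relative
interior of `F` (its interior within the linear span of `F`). -/
theorem stmt_7 {V : Type*} [NormedAddCommGroup V] [NormedSpace ℝ V]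
    [FiniteDimensional ℝ V] (hV : 0 < Module.finrank ℝ V)
    (C : ConvexCone ℝ V) (hCcl : IsClosed (C : Set V))
    (hCspan : Submodule.span ℝ (C : Set V) = ⊤)
    (hCsal : ∀ v ∈ C, -v ∈ C → v = 0)
    (x : V) (hx : x ∈ C) (hx0 : x ≠ 0) :
    ∃ F : Set V, IsClosedExtremalFace (C : Set V) F ∧ x ∈ F ∧
      (∀ F' : Set V, IsClosedExtremalFace (C : Set V) F' → x ∈ F' → F ⊆ F') ∧
      (∃ ε : ℝ, 0 < ε ∧ ∀ z ∈ Submodule.span ℝ F, ‖z - x‖ < ε → z ∈ F) ∧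
      (∀ F'' : Set V, IsClosedExtremalFace (C : Set V) F'' → x ∈ F'' →
        (∀ F' : Set V, IsClosedExtremalFace (C : Set V) F' → x ∈ F' → F'' ⊆ F') →
        F'' = F) :=
  stmt_7_general C hCcl x hx
end

section
/- Let $f:A\to A$ be a surjective endomorphism of an abelian variety over an algebraically closed field of characteristic $0$, written as $f=g+a$ with $g$ an isogeny and $a\in A$. If $g$ is PCD (i.e., $\operatorname{Per}(g)$ is Zariski dense and each $\operatorname{Fix}(g^i)$ is finite), then $f=g+a$ is PCD for every $a\in A$. -/
/-- The map `x ↦ g x - x` as an additive monoid hom. -/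
private def gSubId {A : Type*} [AddCommGroup A] (g : A →+ A) : A →+ A where
  toFun x := g x - x
  map_zero' := by simp
  map_add' x y := by simp; abel

private lemma iter_conj {A : Type*} [AddCommGroup A] (g : A →+ A) (a b : A)
    (hb : g b + a = b) : ∀ (i : ℕ) (x : A),
    (fun z => g z + a)^[i] x = g^[i] (x - b) + b := by
  intro i
  induction i with
  | zero => simp
  | succ i ih =>
    intro x
    rw [Function.iterate_succ_apply', ih x, Function.iterate_succ_apply']
    simp only [map_add]
    rw [show g (g^[i] (x - b)) + g b + a = g (g^[i] (x - b)) + (g b + a) by abel, hb]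

/-- let `f = g + a` be a surjective endomorphism of an abelian variety
over an algebraically closed field of characteristic `0`, with `g` an isogeny and `a` a
point.  If `g` is PCD (each `Fix(gⁱ)` finite and `Per(g)` Zariski dense), then so is
`f = g + a` for every `a`.

The abelian variety is encoded as an additive group `A` with its Zariski topology
(a topological group), together with the two background facts about abelian varieties
used in the proof: every additive endomorphism with finite kernel is surjective
(an isogeny), and periodic points of isogenies are Zariski dense. -/
theorem stmt_18 {A : Type*} [AddCommGroup A] [TopologicalSpace A]
    [IsTopologicalAddGroup A]
    (hdiv : ∀ h : A →+ A, ({x : A | h x = 0} : Set A).Finite → Function.Surjective h)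
    (hper : ∀ h : A →+ A, Function.Surjective h → ({x : A | h x = 0} : Set A).Finite →
      Dense {x : A | ∃ i : ℕ, 0 < i ∧ h^[i] x = x})
    (g : A →+ A) (hgsurj : Function.Surjective g)
    (hgker : ({x : A | g x = 0} : Set A).Finite)
    (hgPCD : Dense {x : A | ∃ i : ℕ, 0 < i ∧ g^[i] x = x} ∧
      ∀ i : ℕ, 0 < i → ({x : A | g^[i] x = x} : Set A).Finite)
    (a : A) :
    Dense {x : A | ∃ i : ℕ, 0 < i ∧ (fun z => g z + a)^[i] x = x} ∧
      ∀ i : ℕ, 0 < i → ({x : A | (fun z => g z + a)^[i] x = x} : Set A).Finite := by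
  -- `g - id` has finite kernel (= Fix g), hence is surjective; get a fixed point `b` of `f`.
  have hkerfix : ({x : A | gSubId g x = 0} : Set A) = {x : A | g^[1] x = x} := by
    ext x
    simp [gSubId, sub_eq_zero]
  have hsurj : Function.Surjective (gSubId g) := by
    apply hdiv
    rw [hkerfix]
    exact hgPCD.2 1 one_pos
  obtain ⟨b, hb⟩ := hsurj (-a)
  have hb' : g b + a = b := by
    have : g b - b = -a := hb
    have := sub_eq_iff_eq_add.mp this
    rw [this]; abel
  -- fixed/periodic sets of `f` are translates by `b` of those of `g`
  have hfixeq : ∀ i : ℕ, ({x : A | (fun z => g z + a)^[i] x = x} : Set A)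
      = (fun y => y + b) '' {x : A | g^[i] x = x} := by
    intro i
    ext x
    simp only [Set.mem_setOf_eq, Set.mem_image]
    constructor
    · intro hx
      refine ⟨x - b, ?_, by abel⟩
      have := iter_conj g a b hb' i x
      rw [this] at hx
      have : g^[i] (x - b) = x - b := by
        have := sub_eq_iff_eq_add.mpr hx.symm
        linear_combination (norm := abel) -this
      exact this
    · rintro ⟨y, hy, rfl⟩
      rw [iter_conj g a b hb' i (y + b)]
      simp [hy]
  constructor
  · have hseteq : ({x : A | ∃ i : ℕ, 0 < i ∧ (fun z => g z + a)^[i] x = x} : Set A)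
        = (fun y => y + b) '' {x : A | ∃ i : ℕ, 0 < i ∧ g^[i] x = x} := by
      ext x
      simp only [Set.mem_setOf_eq, Set.mem_image]
      constructor
      · rintro ⟨i, hi, hx⟩
        have hx' : x ∈ (fun y => y + b) '' {x : A | g^[i] x = x} := by
          rw [← hfixeq i]; exact hx
        obtain ⟨y, hy, rfl⟩ := hx'
        exact ⟨y, ⟨i, hi, hy⟩, rfl⟩
      · rintro ⟨y, ⟨i, hi, hy⟩, rfl⟩
        refine ⟨i, hi, ?_⟩
        have : y + b ∈ (fun y => y + b) '' {x : A | g^[i] x = x} :=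
          ⟨y, hy, rfl⟩
        rw [← hfixeq i] at this
        exact this
    rw [hseteq]
    have : DenseRange (fun y : A => y + b) :=
      (Homeomorph.addRight b).surjective.denseRange
    exact this.dense_image (continuous_id.add continuous_const) hgPCD.1
  · intro i hi
    rw [hfixeq i]
    exact (hgPCD.2 i hi).image _
end
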